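/- arXiv:1003.2017 — 7 statements merged into one kernel-verified Lean document; each statement's English description precedes it below -/
import Mathlib

section
/- Let Φ be a reduced crystallographic root system with Weyl group W, let α ∈ Φ₊ and let w ∈ W be such that w⁻¹α is a simple root. Then for every complete rank-2 root subsystem Ψ ⊆ Φ containing α as a non-simple root (with respect to the base determined by w), the set N(w⁻¹) ∩ Ψ is nonempty, where N(w⁻¹) = {β ∈ Φ₊ : w⁻¹β ∈ Φ₋}. -/
variable {V : Type*} [AddCommGroup V] [Module ℝ V]

/-- `α` is a simple root of the (sub)system `S` relative to the positive system `pos`: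
it is a positive root of `S` which is not a sum of two positive roots of `S`. -/
def IsPosSimple (pos S : Finset V) (α : V) : Prop :=
  α ∈ S ∧ α ∈ pos ∧ ¬ ∃ β ∈ S, β ∈ pos ∧ ∃ γ ∈ S, γ ∈ pos ∧ α = β + γ

/-- `Ψ` is a complete rank-2 root subsystem of `Φ`: the intersection of `Φ` with the
real span of `Ψ` is `Ψ`, and that span is 2-dimensional. -/
def IsCompleteRank2 (Φ Ψ : Finset V) : Prop :=
  Ψ ⊆ Φ ∧ ((Φ : Set V) ∩ (Submodule.span ℝ (Ψ : Set V) : Set V)) = (Ψ : Set V) ∧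
    Module.finrank ℝ (Submodule.span ℝ (Ψ : Set V)) = 2

/-- if `w⁻¹α` is a simple root, then for every complete rank-2 root
subsystem `Ψ ⊆ Φ` containing `α` as a non-simple root, the set
`N(w⁻¹) ∩ Ψ = {β ∈ Φ₊ ∩ Ψ : w⁻¹β ∈ Φ₋}` is nonempty. -/
theorem stmt3
    (Φ : Finset V) (hzero : (0 : V) ∉ Φ) (hsymm : ∀ α ∈ Φ, -α ∈ Φ)
    (hred : ∀ α ∈ Φ, (2 : ℝ) • α ∉ Φ)
    (pos : Finset V) (hposΦ : pos ⊆ Φ)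
    (hpos : ∀ α ∈ Φ, (α ∈ pos ↔ -α ∉ pos))
    (w : V ≃ₗ[ℝ] V) (hw : ∀ α, α ∈ Φ ↔ w α ∈ Φ)
    (α : V) (hα : α ∈ pos)
    (hsimple : IsPosSimple pos Φ (w.symm α))
    (Ψ : Finset V) (hΨ : IsCompleteRank2 Φ Ψ)
    (hαΨ : α ∈ Ψ) (hns : ¬ IsPosSimple pos Ψ α) :
    ∃ β ∈ Ψ, β ∈ pos ∧ w.symm β ∉ pos := by
  simp only [IsPosSimple, not_and, not_not] at hns
  obtain ⟨β, hβΨ, hβpos, γ, hγΨ, hγpos, hsum⟩ := hns hαΨ hα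
  obtain ⟨hΨΦ, -, -⟩ := hΨ
  have hβΦ : w.symm β ∈ Φ := by
    rw [hw, LinearEquiv.apply_symm_apply]; exact hΨΦ hβΨ
  have hγΦ : w.symm γ ∈ Φ := by
    rw [hw, LinearEquiv.apply_symm_apply]; exact hΨΦ hγΨ
  by_cases h : w.symm β ∈ pos
  · refine ⟨γ, hγΨ, hγpos, fun hγ' => ?_⟩
    exact hsimple.2.2 ⟨w.symm β, hβΦ, h, w.symm γ, hγΦ, hγ', by
      rw [hsum, map_add]⟩
  · exact ⟨β, hβΨ, hβpos, h⟩
end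

section
/- Let V be an integrable representation of a semisimple Lie algebra 𝔤 whose restriction is small, i.e., 2α is not a weight of V for any root α. Then on the zero weight space V[0], the truncated Casimir operator κ_α = (α,α)/2·(e_α f_α + f_α e_α) acts as (α,α)·(1 − s_α), where s_α is the action of the reflection s_α ∈ W on V[0]. -/
/-- Truncated exponential series of an endomorphism; if `u ^ N = 0` and the series is
truncated at `N` or beyond, this is the exponential `exp u`. -/
noncomputable def truncExp {V : Type*} [AddCommGroup V] [Module ℂ V]
    (u : Module.End ℂ V) (N : ℕ) : Module.End ℂ V :=
  ∑ i ∈ Finset.range N, ((i.factorial : ℂ)⁻¹) • u ^ i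

lemma trunc3 {V : Type*} [AddCommGroup V] [Module ℂ V]
    (g : Module.End ℂ V) (N : ℕ) (hN : g ^ N = 0) (x : V)
    (hx : g (g (g x)) = 0) :
    truncExp g N x = x + g x + (2⁻¹ : ℂ) • g (g x) := by
  have h3 : (g ^ 3) x = 0 := by
    simpa [pow_succ, Module.End.mul_apply] using hx
  have hzero : ∀ i, 3 ≤ i ∨ N ≤ i → (g ^ i) x = 0 := by
    intro i hi
    rcases hi with hi | hi
    · obtain ⟨k, rfl⟩ := Nat.exists_eq_add_of_le hi
      rw [add_comm, pow_add, Module.End.mul_apply, h3, map_zero]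
    · obtain ⟨k, rfl⟩ := Nat.exists_eq_add_of_le hi
      rw [add_comm, pow_add, Module.End.mul_apply, hN, LinearMap.zero_apply, map_zero]
  have happ : truncExp g N x = ∑ i ∈ Finset.range N, ((i.factorial : ℂ)⁻¹) • (g ^ i) x := by
    simp [truncExp, LinearMap.sum_apply]
  rw [happ]
  have e1 : ∑ i ∈ Finset.range N, ((i.factorial : ℂ)⁻¹) • (g ^ i) x
      = ∑ i ∈ Finset.range (max N 3), ((i.factorial : ℂ)⁻¹) • (g ^ i) x := by
    refine Finset.sum_subset (Finset.range_subset_range.mpr (le_max_left _ _)) ?_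
    intro i _ hni
    rw [hzero i (Or.inr (by simpa using hni)), smul_zero]
  have e2 : ∑ i ∈ Finset.range 3, ((i.factorial : ℂ)⁻¹) • (g ^ i) x
      = ∑ i ∈ Finset.range (max N 3), ((i.factorial : ℂ)⁻¹) • (g ^ i) x := by
    refine Finset.sum_subset (Finset.range_subset_range.mpr (le_max_right _ _)) ?_
    intro i _ hni
    rw [hzero i (Or.inl (by simpa using hni)), smul_zero]
  rw [e1, ← e2]
  simp [Finset.sum_range_succ, pow_succ, Module.End.mul_apply, Nat.factorial]

/-- let `(e, f, h)` be an `sl₂`-triple (attached to a root `α`, with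
`c = (α,α)`) acting on an integrable module `V` (so `e`, `f` are nilpotent and the
triple exponential `s = exp(e)·exp(−f)·exp(e)` — realising the reflection `s_α` of the
Weyl group on the zero weight space — is defined).  If the module is small, i.e.
`e² = 0 = f²` on the zero weight space `V[0] = ker h`, then on `V[0]` the truncated
Casimir operator `κ_α = (α,α)/2·(e f + f e)` acts as `(α,α)·(1 − s_α)`. -/
theorem stmt10 {V : Type*} [AddCommGroup V] [Module ℂ V]
    (e f h : Module.End ℂ V)
    (hef : e * f - f * e = h)
    (hhe : h * e - e * h = (2 : ℂ) • e)
    (hhf : h * f - f * h = (-2 : ℂ) • f)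
    (N : ℕ) (hNe : e ^ N = 0) (hNf : f ^ N = 0)
    (c : ℂ)
    (hsmall : ∀ v ∈ LinearMap.ker h, e (e v) = 0 ∧ f (f v) = 0)
    (s : Module.End ℂ V)
    (hs : s = truncExp e N * truncExp (-f) N * truncExp e N) :
    ∀ v ∈ LinearMap.ker h,
      (c / 2) • ((e * f + f * e) v) = c • (v - s v) := by
  intro v hv
  have hv0 : h v = 0 := hv
  obtain ⟨he2, hf2⟩ := hsmall v hv
  -- pointwise commutator identities
  have cef : ∀ w, e (f w) - f (e w) = h w := fun w => by
    simpa [Module.End.mul_apply] using DFunLike.congr_fun hef w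
  have che : ∀ w, h (e w) - e (h w) = (2 : ℂ) • e w := fun w => by
    simpa [Module.End.mul_apply] using DFunLike.congr_fun hhe w
  have chf : ∀ w, h (f w) - f (h w) = (-2 : ℂ) • f w := fun w => by
    simpa [Module.End.mul_apply] using DFunLike.congr_fun hhf w
  have hhev : h (e v) = (2 : ℂ) • e v := by
    have := che v; rw [hv0, map_zero, sub_zero] at this; exact this
  have hhfv : h (f v) = (-2 : ℂ) • f v := by
    have := chf v; rw [hv0, map_zero, sub_zero] at this; exact this
  have hefv : e (f v) = f (e v) := by
    have := cef v; rw [hv0, sub_eq_zero] at this; exact this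
  have heu : e (f (e v)) = (2 : ℂ) • e v := by
    have := cef (e v); rw [he2, map_zero, sub_zero, hhev] at this; exact this
  have hfu : f (f (e v)) = (2 : ℂ) • f v := by
    have := cef (f v)
    rw [hf2, map_zero, hefv, hhfv, zero_sub] at this
    have := neg_eq_iff_eq_neg.mp this
    rw [this]; module
  have hNf' : (-f) ^ N = 0 := by rw [neg_pow, hNf, mul_zero]
  -- step A
  have hA : truncExp e N v = v + e v := by
    have h3 : e (e (e v)) = 0 := by rw [he2, map_zero]
    rw [trunc3 e N hNe v h3, he2, smul_zero, add_zero]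
  -- step B
  have hB : truncExp (-f) N (v + e v) = v + e v - f (e v) := by
    have h3 : (-f) ((-f) ((-f) (v + e v))) = 0 := by
      simp [map_add, hf2, hfu, map_smul]
    rw [trunc3 (-f) N hNf' _ h3]
    simp only [LinearMap.neg_apply, map_add, map_neg, map_smul, neg_neg, hf2, hfu]
    module
  -- step C
  have hC : truncExp e N (v + e v - f (e v)) = v - f (e v) := by
    have h3 : e (e (e (v + e v - f (e v)))) = 0 := by
      simp [map_add, map_sub, map_smul, he2, heu]
    rw [trunc3 e N hNe _ h3]
    simp only [map_add, map_sub, map_smul, he2, heu, map_zero, smul_zero]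
    module
  have hsv : s v = v - f (e v) := by
    rw [hs, Module.End.mul_apply, Module.End.mul_apply, hA, hB, hC]
  rw [hsv]
  simp only [LinearMap.add_apply, Module.End.mul_apply, hefv]
  module
end

section
/- For 𝔤 = 𝔰𝔩_n and V = ℂⁿ its vector representation, the tensor power V^{⊗n} is a small 𝔤-module: for no root α of 𝔰𝔩_n is 2α a weight of V^{⊗n}. -/
/-!
Evaluate both sides at the trace-zero vector `x = e_j - (1/n, …, 1/n)`. The weight
`x ↦ ∑ₖ x (idx k)` takes the value `#{k | idx k = j} - 1 ≥ -1` there, while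
`2 (x i - x j) = -2`.
-/

open Finset

section

variable {ι : Type*} (K : Type*) [Fintype ι] [DecidableEq ι] [Field K]

def traceFreeSingle (j : ι) : ι → K :=
  Pi.single j 1 - Function.const ι (Fintype.card ι : K)⁻¹

variable {K} [CharZero K] [Nonempty ι]

theorem sum_traceFreeSingle (j : ι) : ∑ m, traceFreeSingle K j m = 0 := by
  have hcard : (Fintype.card ι : K) ≠ 0 := by simp
  simp [traceFreeSingle, sum_sub_distrib, hcard]

theorem sum_traceFreeSingle_comp (idx : ι → ι) (j : ι) :
    ∑ k, traceFreeSingle K j (idx k) = #{k | idx k = j} - 1 := by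
  have hcard : (Fintype.card ι : K) ≠ 0 := by simp
  simp [traceFreeSingle, sum_sub_distrib, Pi.single_apply, sum_boole, hcard]

theorem not_exists_sum_comp_eq_two_mul_sub {i j : ι} (hij : i ≠ j) :
    ¬ ∃ idx : ι → ι, ∀ x : ι → K, ∑ k, x k = 0 → ∑ k, x (idx k) = 2 * (x i - x j) := by
  rintro ⟨idx, h⟩
  have key := h _ (sum_traceFreeSingle j)
  rw [sum_traceFreeSingle_comp] at key
  simp only [traceFreeSingle, Pi.sub_apply, Pi.single_eq_same, Pi.single_eq_of_ne hij,
    Function.const_apply] at key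
  exact Nat.cast_add_one_ne_zero #{k | idx k = j} (by linear_combination key)

end

/-- for `𝔤 = 𝔰𝔩_n` and `V = ℂⁿ` its vector representation, `V^{⊗n}` is
small: for no root `θ_i − θ_j` (`i ≠ j`) is `2(θ_i − θ_j)` a weight of `V^{⊗n}`.
The weights of `V^{⊗n}` are the functionals `x ↦ Σ_k x(idx k)` (for `idx : Fin n → Fin n`)
restricted to the trace-zero hyperplane, and `2(θ_i − θ_j)` is `x ↦ 2(x i − x j)`. -/
theorem stmt11 (n : ℕ) (i j : Fin n) (hij : i ≠ j) :
    ¬ ∃ idx : Fin n → Fin n,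
        ∀ x : Fin n → ℂ, (∑ k, x k) = 0 →
          (∑ k, x (idx k)) = 2 * (x i - x j) :=
  have : Nonempty (Fin n) := ⟨i⟩
  not_exists_sum_comp_eq_two_mul_sub hij
end

section
/- In the Tits extension W̃ of a Weyl group W (generated by s̃_i subject to the braid relations, s̃_i⁴ = 1, s̃_i²s̃_j² = s̃_j²s̃_i², and s̃_i s̃_j² s̃_i⁻¹ = s̃_j²(s̃_i²)^{−a_{ji}}), the subgroup Z generated by the elements s̃_i² is a normal abelian subgroup, and the quotient W̃/Z is isomorphic to W. -/
/-- The alternating word `s_i s_j s_i ⋯` of length `m` in the free group. -/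
def altWord {ι : Type*} (i j : ι) : ℕ → FreeGroup ι
  | 0 => 1
  | (m + 1) => FreeGroup.of i * altWord j i m

/-- The Coxeter exponent `m_{ij} ∈ {2,3,4,6,∞}` attached to a generalised Cartan matrix,
according to `a_{ij}a_{ji} ∈ {0,1,2,3,≥4}`; here `0` encodes `∞`. -/
def coxExp {ι : Type*} (A : ι → ι → ℤ) (i j : ι) : ℕ :=
  if A i j * A j i = 0 then 2
  else if A i j * A j i = 1 then 3
  else if A i j * A j i = 2 then 4
  else if A i j * A j i = 3 then 6
  else 0

/-- Relators of the Tits extension `W̃`: the braid relations, `s̃_i⁴ = 1`,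
`[s̃_i², s̃_j²] = 1` and `s̃_i s̃_j² s̃_i⁻¹ = s̃_j² (s̃_i²)^{−a_{ji}}`. -/
def titsRels {ι : Type*} (A : ι → ι → ℤ) : Set (FreeGroup ι) :=
  {r | (∃ i j, i ≠ j ∧ coxExp A i j ≠ 0 ∧
          r = altWord i j (coxExp A i j) * (altWord j i (coxExp A i j))⁻¹)
     ∨ (∃ i, r = (FreeGroup.of i) ^ 4)
     ∨ (∃ i j, r = (FreeGroup.of i) ^ 2 * (FreeGroup.of j) ^ 2 *
          ((FreeGroup.of j) ^ 2 * (FreeGroup.of i) ^ 2)⁻¹)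
     ∨ (∃ i j, i ≠ j ∧
          r = FreeGroup.of i * (FreeGroup.of j) ^ 2 * (FreeGroup.of i)⁻¹ *
            ((FreeGroup.of j) ^ 2 * ((FreeGroup.of i) ^ 2) ^ (-(A j i)))⁻¹)}

/-- Relators of the Weyl group `W`: `s_i² = 1` and `(s_i s_j)^{m_{ij}} = 1`. -/
def weylRels {ι : Type*} (A : ι → ι → ℤ) : Set (FreeGroup ι) :=
  {r | (∃ i, r = (FreeGroup.of i) ^ 2)
     ∨ (∃ i j, i ≠ j ∧ coxExp A i j ≠ 0 ∧
          r = (FreeGroup.of i * FreeGroup.of j) ^ (coxExp A i j))}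

/-- `A` is a generalised Cartan matrix. -/
def IsGCM {ι : Type*} (A : ι → ι → ℤ) : Prop :=
  (∀ i, A i i = 2) ∧ (∀ i j, i ≠ j → A i j ≤ 0) ∧ (∀ i j, A i j = 0 → A j i = 0)

section AuxLemmas

variable {ι : Type*} {G : Type*} [Group G]

private lemma aux_semiconj (a b : G) (n : ℕ) : a * (b * a) ^ n = (a * b) ^ n * a :=
  (SemiconjBy.pow_right (by simp [SemiconjBy, mul_assoc]) n)

/-- Key identity: if all `f k` are involutions, the image of
`altWord i j m * (altWord j i m)⁻¹` is `(f i * f j) ^ m`. -/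
private lemma lift_altWord (f : ι → G) (h : ∀ k, f k ^ 2 = 1) :
    ∀ (m : ℕ) (i j : ι),
      FreeGroup.lift f (altWord i j m) * (FreeGroup.lift f (altWord j i m))⁻¹
        = (f i * f j) ^ m
  | 0, i, j => by simp [altWord]
  | (m+1), i, j => by
    have hinv : ∀ k, (f k)⁻¹ = f k := fun k => by
      rw [inv_eq_iff_mul_eq_one, ← sq]; exact h k
    have ih := lift_altWord f h m j i
    simp only [altWord, map_mul, FreeGroup.lift_apply_of, mul_inv_rev]
    calc f i * FreeGroup.lift f (altWord j i m) *
          ((FreeGroup.lift f (altWord i j m))⁻¹ * (f j)⁻¹)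
        = f i * (FreeGroup.lift f (altWord j i m) *
            (FreeGroup.lift f (altWord i j m))⁻¹) * (f j)⁻¹ := by group
      _ = f i * (f j * f i) ^ m * f j := by rw [ih, hinv]
      _ = (f i * f j) ^ m * (f i * f j) := by rw [aux_semiconj, mul_assoc]
      _ = (f i * f j) ^ (m+1) := (pow_succ _ _).symm

end AuxLemmas

/-- in the Tits extension `W̃` of the Weyl group `W` of a generalised
Cartan matrix `A`, the subgroup `Z` generated by the squares `s̃_i²` is a normal abelian
subgroup, and `W̃/Z ≅ W`; the latter is expressed by a surjective homomorphism
`W̃ → W`, `s̃_i ↦ s_i`, whose kernel is exactly `Z`. -/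
theorem stmt12 {ι : Type*} (A : ι → ι → ℤ) (hA : IsGCM A) :
    letI Wt := PresentedGroup (titsRels A)
    letI Z : Subgroup Wt :=
      Subgroup.closure {x | ∃ i : ι, x = (PresentedGroup.of i) ^ 2}
    Z.Normal ∧ (∀ a ∈ Z, ∀ b ∈ Z, a * b = b * a) ∧
      ∃ φ : Wt →* PresentedGroup (weylRels A),
        (∀ i : ι, φ (PresentedGroup.of i) = PresentedGroup.of i) ∧
        Function.Surjective φ ∧ φ.ker = Z := by
  classical
  set Wt := PresentedGroup (titsRels A) with hWtdef
  set S : Set Wt := {x | ∃ i : ι, x = (PresentedGroup.of i) ^ 2} with hSdef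
  set Z : Subgroup Wt := Subgroup.closure S with hZdef
  -- relators are trivial in the presented groups
  have relOne : ∀ r ∈ titsRels A, PresentedGroup.mk (titsRels A) r = 1 := fun r hr =>
    (QuotientGroup.eq_one_iff _).mpr (Subgroup.subset_normalClosure hr)
  have relOneW : ∀ r ∈ weylRels A, PresentedGroup.mk (weylRels A) r = 1 := fun r hr =>
    (QuotientGroup.eq_one_iff _).mpr (Subgroup.subset_normalClosure hr)
  -- basic relations in Wt
  have hof4 : ∀ i : ι, (PresentedGroup.of (rels := titsRels A) i) ^ 4 = 1 := by
    intro i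
    have := relOne _ (Or.inr (Or.inl ⟨i, rfl⟩))
    rw [map_pow] at this
    exact this
  have hcommsq : ∀ i j : ι,
      (PresentedGroup.of (rels := titsRels A) i) ^ 2 * (PresentedGroup.of j) ^ 2
        = (PresentedGroup.of j) ^ 2 * (PresentedGroup.of i) ^ 2 := by
    intro i j
    have := relOne _ (Or.inr (Or.inr (Or.inl ⟨i, j, rfl⟩)))
    rw [map_mul, map_inv, map_mul, map_mul, map_pow, map_pow, mul_inv_eq_one] at this
    exact this
  have hrel4 : ∀ i j : ι, i ≠ j →
      PresentedGroup.of (rels := titsRels A) i * (PresentedGroup.of j) ^ 2 *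
          (PresentedGroup.of i)⁻¹
        = (PresentedGroup.of j) ^ 2 * ((PresentedGroup.of i) ^ 2) ^ (-(A j i)) := by
    intro i j hij
    have := relOne _ (Or.inr (Or.inr (Or.inr ⟨i, j, hij, rfl⟩)))
    simp only [map_mul, map_inv, map_pow, map_zpow] at this
    rwa [mul_inv_eq_one] at this
  have hgen : ∀ j : ι, ((PresentedGroup.of j : Wt)) ^ 2 ∈ Z :=
    fun j => Subgroup.subset_closure ⟨j, rfl⟩
  -- conjugation of a generator of Z by a generator of Wt stays in Z
  have hconjS : ∀ (k : ι) (x : Wt), x ∈ S →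
      PresentedGroup.of k * x * (PresentedGroup.of k)⁻¹ ∈ Z := by
    rintro k _ ⟨j, rfl⟩
    by_cases h : k = j
    · subst h
      have e : PresentedGroup.of (rels := titsRels A) k * (PresentedGroup.of k) ^ 2 *
          (PresentedGroup.of k)⁻¹ = (PresentedGroup.of k) ^ 2 := by group
      rw [e]
      exact hgen k
    · rw [hrel4 k j h]
      exact Subgroup.mul_mem _ (hgen j) (Subgroup.zpow_mem _ (hgen k) _)
  -- conjugation by any g mapping S into Z maps all of Z into Z
  have hconjZ : ∀ g : Wt, (∀ x ∈ S, g * x * g⁻¹ ∈ Z) → ∀ z ∈ Z, g * z * g⁻¹ ∈ Z := by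
    intro g hg z hz
    have hmap : Z.map (MulAut.conj g).toMonoidHom ≤ Z := by
      rw [MonoidHom.map_closure, Subgroup.closure_le]
      rintro _ ⟨x, hx, rfl⟩
      exact hg x hx
    exact hmap ⟨z, hz, rfl⟩
  have h1 : ∀ (k : ι), ∀ z ∈ Z, PresentedGroup.of k * z * (PresentedGroup.of k)⁻¹ ∈ Z :=
    fun k => hconjZ _ (hconjS k)
  have hinv_of : ∀ k : ι, (PresentedGroup.of (rels := titsRels A) k)⁻¹
      = (PresentedGroup.of k) ^ 3 := by
    intro k
    rw [inv_eq_iff_mul_eq_one, ← pow_succ']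
    exact hof4 k
  have h2 : ∀ (k : ι), ∀ z ∈ Z, (PresentedGroup.of k)⁻¹ * z * PresentedGroup.of k ∈ Z := by
    intro k z hz
    have hm := h1 k _ (h1 k _ (h1 k z hz))
    have e : PresentedGroup.of (rels := titsRels A) k *
        (PresentedGroup.of k * (PresentedGroup.of k * z * (PresentedGroup.of k)⁻¹) *
          (PresentedGroup.of k)⁻¹) * (PresentedGroup.of k)⁻¹
        = (PresentedGroup.of k) ^ 3 * z * ((PresentedGroup.of k) ^ 3)⁻¹ := by
      rw [pow_succ, pow_succ, pow_one, mul_inv_rev, mul_inv_rev]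
      group
    rw [e, ← hinv_of, inv_inv] at hm
    exact hm
  -- Z is normal
  have hNormal : Z.Normal := by
    rw [← Subgroup.normalizer_eq_top_iff, eq_top_iff]
    intro g _
    refine PresentedGroup.generated_by _ _ (fun k => ?_) g
    rw [Subgroup.mem_normalizer_iff]
    intro h
    constructor
    · exact fun hh => h1 k h hh
    · intro hh
      have e : (PresentedGroup.of (rels := titsRels A) k)⁻¹ *
          (PresentedGroup.of k * h * (PresentedGroup.of k)⁻¹) * PresentedGroup.of k = h := by
        group
      rw [← e]
      exact h2 k _ hh
  -- Z is abelian
  have habel : ∀ a ∈ Z, ∀ b ∈ Z, a * b = b * a := by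
    intro a ha b hb
    refine Subgroup.closure_induction₂
      (p := fun x y _ _ => Commute x y) ?_ ?_ ?_ ?_ ?_ ?_ ?_ ha hb
    · rintro _ _ ⟨i, rfl⟩ ⟨j, rfl⟩
      exact hcommsq i j
    · exact fun x _ => Commute.one_left x
    · exact fun x _ => Commute.one_right x
    · exact fun x y z _ _ _ h₁ h₂ => h₁.mul_left h₂
    · exact fun y z x _ _ _ h₁ h₂ => h₁.mul_right h₂
    · exact fun x y _ _ h => h.inv_left
    · exact fun x y _ _ h => h.inv_right
  -- construct φ : Wt →* W
  have sqW : ∀ i : ι, (PresentedGroup.of (rels := weylRels A) i) ^ 2 = 1 := by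
    intro i
    have := relOneW _ (Or.inl ⟨i, rfl⟩)
    rw [map_pow] at this
    exact this
  have hφrels : ∀ r ∈ titsRels A,
      FreeGroup.lift (fun i : ι => (PresentedGroup.of i : PresentedGroup (weylRels A))) r = 1 := by
    rintro r (⟨i, j, hij, hm, rfl⟩ | ⟨i, rfl⟩ | ⟨i, j, rfl⟩ | ⟨i, j, hij, rfl⟩)
    · rw [map_mul, map_inv, lift_altWord _ sqW]
      have := relOneW _ (Or.inr ⟨i, j, hij, hm, rfl⟩)
      rw [map_pow, map_mul] at this
      exact this
    · rw [map_pow, FreeGroup.lift_apply_of, show (4 : ℕ) = 2 * 2 from rfl, pow_mul, sqW, one_pow]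
    · simp [sqW]
    · simp [sqW]
  refine ⟨hNormal, habel, PresentedGroup.toGroup hφrels, fun i => PresentedGroup.toGroup.of hφrels,
    ?_, ?_⟩
  · -- surjectivity
    rw [← MonoidHom.range_eq_top, eq_top_iff, ← PresentedGroup.closure_range_of (weylRels A),
      Subgroup.closure_le]
    rintro _ ⟨i, rfl⟩
    exact ⟨PresentedGroup.of i, PresentedGroup.toGroup.of hφrels⟩
  · -- kernel = Z
    haveI := hNormal
    set π : Wt →* Wt ⧸ Z := QuotientGroup.mk' Z with hπdef
    have hπsq : ∀ k : ι, (π (PresentedGroup.of k)) ^ 2 = 1 := by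
      intro k
      rw [← map_pow]
      exact (QuotientGroup.eq_one_iff _).mpr (Subgroup.subset_closure ⟨k, rfl⟩)
    have liftTQ : FreeGroup.lift (fun i : ι => π (PresentedGroup.of i))
        = π.comp (PresentedGroup.mk (titsRels A)) :=
      FreeGroup.ext_hom _ _ (fun a => by simp [PresentedGroup.of, PresentedGroup.mk])
    have hψrels : ∀ r ∈ weylRels A,
        FreeGroup.lift (fun i : ι => π (PresentedGroup.of i)) r = 1 := by
      rintro r (⟨i, rfl⟩ | ⟨i, j, hij, hm, rfl⟩)
      · rw [map_pow, FreeGroup.lift_apply_of]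
        exact hπsq i
      · rw [map_pow, map_mul, FreeGroup.lift_apply_of, FreeGroup.lift_apply_of,
          ← lift_altWord _ hπsq (coxExp A i j) i j, ← map_inv, ← map_mul, liftTQ,
          MonoidHom.comp_apply, relOne _ (Or.inl ⟨i, j, hij, hm, rfl⟩), map_one]
    have hcompo : (PresentedGroup.toGroup hψrels).comp (PresentedGroup.toGroup hφrels) = π := by
      refine PresentedGroup.ext fun x => ?_
      rw [MonoidHom.comp_apply, PresentedGroup.toGroup.of hφrels, PresentedGroup.toGroup.of hψrels]
    apply le_antisymm
    · intro x hx
      have hx1 : (PresentedGroup.toGroup hφrels) x = 1 := hx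
      have hπx : π x = 1 := by
        rw [← hcompo, MonoidHom.comp_apply, hx1, map_one]
      rwa [hπdef, ← MonoidHom.mem_ker, QuotientGroup.ker_mk'] at hπx
    · rw [hZdef, Subgroup.closure_le]
      rintro _ ⟨i, rfl⟩
      have hφsq : (PresentedGroup.toGroup hφrels) ((PresentedGroup.of i : Wt) ^ 2)
          = (PresentedGroup.of i : PresentedGroup (weylRels A)) ^ 2 := by
        rw [map_pow, PresentedGroup.toGroup.of hφrels]
      exact MonoidHom.mem_ker.mpr (by rw [hφsq, sqW])
end

section
/- In the Tits extension W̃ of a Weyl group W of a symmetrizable Kac–Moody algebra, the abelian subgroup Z generated by the elements s̃_i² is isomorphic as a W-module to Q^∨/2Q^∨ ≅ (ℤ/2ℤ)^{|I|}, where Q^∨ is the coroot lattice; in particular each s̃_i² has order exactly 2 and the s̃_i² generate a group of order 2^{|I|}. -/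
open Subgroup Function

section ElementaryAbelian

open scoped IsMulCommutative

variable {G : Type*} [Group G] {ι : Type*} [Fintype ι] [DecidableEq ι]

theorem bijective_of_apply_eq_single {g : ι → G} (hcomm : ∀ i j, Commute (g i) (g j))
    (hsq : ∀ i, g i ^ 2 = 1) (χ : closure (Set.range g) →* Multiplicative (ι → ZMod 2))
    (hχ : ∀ i, χ ⟨g i, subset_closure (Set.mem_range_self i)⟩ = .ofAdd (Pi.single i 1)) :
    Bijective χ := by
  have : IsMulCommutative (closure (Set.range g)) := isMulCommutative_closure <| by
    rintro _ ⟨i, rfl⟩ _ ⟨j, rfl⟩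
    exact hcomm i j
  let gen (i : ι) : closure (Set.range g) := ⟨g i, subset_closure (Set.mem_range_self i)⟩
  have hgen (i : ι) (n : ℕ) : gen i ^ n = gen i ^ (n % 2) :=
    pow_eq_pow_mod n (Subtype.ext (hsq i))
  let σ : Multiplicative (ι → ZMod 2) →* closure (Set.range g) :=
    { toFun v := ∏ i, gen i ^ (v.toAdd i).val
      map_one' := by simp
      map_mul' v w := by
        simp only [← Finset.prod_mul_distrib, ← pow_add, toAdd_mul, Pi.add_apply, ZMod.val_add]
        exact Finset.prod_congr rfl fun i _ => (hgen i _).symm }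
  have hσχ : LeftInverse σ χ := by
    suffices σ.comp χ = MonoidHom.id _ from DFunLike.congr_fun this
    refine MonoidHom.eq_of_eqOn_dense closure_closure_coe_preimage ?_
    rintro z ⟨i, hi⟩
    obtain rfl : z = gen i := Subtype.ext hi.symm
    rw [MonoidHom.comp_apply, hχ]
    refine (Finset.prod_eq_single i (fun j _ hj => ?_) (by simp)).trans ?_
    · simp [Pi.single_eq_of_ne hj]
    · rw [toAdd_ofAdd, Pi.single_eq_same]
      exact pow_one (gen i)
  have hχσ : RightInverse σ χ := by
    intro v
    change χ (∏ i, gen i ^ (v.toAdd i).val) = v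
    simp only [map_prod, map_pow, gen, hχ, ← ofAdd_nsmul, ← ofAdd_sum, ← Pi.single_smul,
      nsmul_eq_mul, mul_one, ZMod.natCast_val, ZMod.cast_id', id, Finset.univ_sum_single]
    rfl
  exact ⟨hσχ.injective, hχσ.surjective⟩

theorem exists_mulEquiv_closure_range_of_sq_eq_one {H : Type*} [Group H] {g : ι → G}
    (hcomm : ∀ i j, Commute (g i) (g j)) (hsq : ∀ i, g i ^ 2 = 1) (f : G →* H)
    {τ : Multiplicative (ι → ZMod 2) →* H} (hτ : Injective τ)
    (hfg : ∀ i, f (g i) = τ (.ofAdd (Pi.single i 1))) :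
    ∃ φ : closure (Set.range g) ≃* Multiplicative (ι → ZMod 2), ∀ z, τ (φ z) = f z := by
  have hle : (closure (Set.range g)).map f ≤ τ.range := by
    rw [MonoidHom.map_closure, closure_le]
    rintro _ ⟨_, ⟨i, rfl⟩, rfl⟩
    exact ⟨_, (hfg i).symm⟩
  let χ := (MonoidHom.ofInjective hτ).symm.toMonoidHom.comp
    ((f.domRestrict (closure (Set.range g))).codRestrict τ.range fun z => hle ⟨z, z.2, rfl⟩)
  have hτχ (z : closure (Set.range g)) : τ (χ z) = f z :=
    congrArg Subtype.val ((MonoidHom.ofInjective hτ).apply_symm_apply _)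
  refine ⟨.ofBijective χ (bijective_of_apply_eq_single hcomm hsq χ fun i => hτ ?_), hτχ⟩
  rw [hτχ]
  exact hfg i

end ElementaryAbelian

theorem IsGCM.apply_self {ι : Type*} {A : ι → ι → ℤ} (hA : IsGCM A) (i : ι) : A i i = 2 :=
  hA.1 i

lemma cartan_pair_cases {a b : ℤ} (ha : a ≤ 0) (hb : b ≤ 0) (hab : a = 0 ↔ b = 0)
    (h : a * b ≤ 3) :
    (a = 0 ∧ b = 0) ∨ (a = -1 ∧ b = -1) ∨ (a = -1 ∧ b = -2) ∨ (a = -2 ∧ b = -1) ∨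
      (a = -1 ∧ b = -3) ∨ (a = -3 ∧ b = -1) := by
  rcases ha.eq_or_lt with rfl | ha
  · exact Or.inl ⟨rfl, hab.1 rfl⟩
  have hb : b < 0 := hb.lt_of_ne fun h => ha.ne (hab.2 h)
  have : -3 ≤ a := by nlinarith
  have : -3 ≤ b := by nlinarith
  interval_cases a <;> interval_cases b <;> simp_all

namespace TitsExtension

variable {ι : Type*} (A : ι → ι → ℤ)

lemma of_sq_sq (i : ι) : ((PresentedGroup.of i : PresentedGroup (titsRels A)) ^ 2) ^ 2 = 1 := by
  rw [← pow_mul]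
  exact PresentedGroup.one_of_mem (Or.inr (Or.inl ⟨i, rfl⟩))

lemma commute_of_sq (i j : ι) :
    Commute ((PresentedGroup.of i : PresentedGroup (titsRels A)) ^ 2) (PresentedGroup.of j ^ 2) :=
  mul_inv_eq_one.mp (PresentedGroup.one_of_mem (Or.inr (Or.inr (Or.inl ⟨i, j, rfl⟩))))

/-- The simple reflection `sⱼ` on weights `λ`, recorded by `l k = ⟨λ, αₖ^∨⟩`
(using `⟨αⱼ, αₖ^∨⟩ = a_{kj}`). -/
def reflect (j : ι) (l : ι → ℤ) : ι → ℤ := fun k => l k - l j * A k j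

variable {A}

lemma reflect_involutive {j : ι} (hj : A j j = 2) : Involutive (reflect A j) := by
  intro l
  funext k
  simp only [reflect, hj]
  ring

def signedReflection {j : ι} (hj : A j j = 2) : Equiv.Perm ((ι → ℤ) × ZMod 2) :=
  Equiv.prodShear (reflect_involutive hj).toPerm
    fun l => Equiv.addRight ((max (l j) 0 : ℤ) : ZMod 2)

lemma signedReflection_apply {j : ι} (hj : A j j = 2) (p : (ι → ℤ) × ZMod 2) :
    signedReflection hj p = (reflect A j p.1, p.2 + ((max (p.1 j) 0 : ℤ) : ZMod 2)) := rfl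

variable (ι) in
def signTwist [Fintype ι] : Multiplicative (ι → ZMod 2) →* Equiv.Perm ((ι → ℤ) × ZMod 2) where
  toFun v := Equiv.prodShear (Equiv.refl _) fun l => Equiv.addRight (∑ k, v.toAdd k * l k)
  map_one' := by ext ⟨l, e⟩ <;> simp
  map_mul' v w := by
    ext ⟨l, e⟩
    · rfl
    · simp only [Equiv.Perm.mul_apply, Equiv.prodShear_apply, Equiv.coe_refl, id,
        Equiv.coe_addRight, toAdd_mul, Pi.add_apply, add_mul, Finset.sum_add_distrib]
      ring

section Fintype

variable [Fintype ι]

lemma signTwist_apply (v : ι → ZMod 2) (p : (ι → ℤ) × ZMod 2) :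
    signTwist ι (.ofAdd v) p = (p.1, p.2 + ∑ k, v k * p.1 k) := rfl

variable [DecidableEq ι]

lemma signTwist_injective : Injective (signTwist ι) := by
  intro v w h
  funext j
  change v.toAdd j = w.toAdd j
  simpa [signTwist, Pi.single_apply] using
    congrArg Prod.snd (DFunLike.congr_fun h (Pi.single j 1, 0))

lemma signedReflection_sq {j : ι} (hj : A j j = 2) :
    signedReflection hj ^ 2 = signTwist ι (.ofAdd (Pi.single j 1)) := by
  ext ⟨l, e⟩ : 1
  simp only [pow_two, Equiv.Perm.mul_apply, signedReflection_apply, signTwist_apply,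
    reflect_involutive hj l, Pi.single_apply, ite_mul, one_mul, zero_mul, Finset.sum_ite_eq',
    Finset.mem_univ, if_true, Prod.mk.injEq, true_and, reflect, hj]
  rw [add_assoc, add_right_inj, ← Int.cast_add, ZMod.intCast_eq_intCast_iff_dvd_sub]
  omega

lemma signedReflection_mul_signTwist {i : ι} (hi : A i i = 2) (v : ι → ZMod 2) :
    signedReflection hi * signTwist ι (.ofAdd v) =
      signTwist ι (.ofAdd (update v i (v i - ∑ j, (A j i : ZMod 2) * v j))) *
        signedReflection hi := by
  ext ⟨l, e⟩ : 1
  simp only [Equiv.Perm.mul_apply, signedReflection_apply, signTwist_apply, Prod.mk.injEq,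
    true_and]
  set c := ∑ j, (A j i : ZMod 2) * v j
  have hupd : update v i (v i - c) = v - Pi.single i c := by
    funext k
    by_cases hk : k = i
    · subst hk; simp
    · simp [hk]
  have hsum : ∑ k, v k * ((l i : ZMod 2) * A k i) = l i * c := by
    rw [Finset.mul_sum]
    exact Finset.sum_congr rfl fun _ _ => by ring
  simp only [hupd, Pi.sub_apply, reflect, sub_mul, Finset.sum_sub_distrib, Pi.single_apply,
    ite_mul, zero_mul, Finset.sum_ite_eq', Finset.mem_univ, if_true, hi]
  push_cast
  simp only [mul_sub, Finset.sum_sub_distrib, hsum]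
  ring

end Fintype

lemma lift_signedReflection_braid (hA : IsGCM A) {i j : ι} (hij : i ≠ j)
    (hm : coxExp A i j ≠ 0) :
    FreeGroup.lift (fun k => signedReflection (hA.apply_self k)) (altWord i j (coxExp A i j)) =
      FreeGroup.lift (fun k => signedReflection (hA.apply_self k))
        (altWord j i (coxExp A i j)) := by
  have hle : A i j * A j i ≤ 3 := by
    contrapose! hm
    simp only [coxExp]
    split_ifs <;> omega
  rcases cartan_pair_cases (hA.2.1 i j hij) (hA.2.1 j i hij.symm) ⟨hA.2.2 i j, hA.2.2 j i⟩ hle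
    with ⟨ha, hb⟩ | ⟨ha, hb⟩ | ⟨ha, hb⟩ | ⟨ha, hb⟩ | ⟨ha, hb⟩ | ⟨ha, hb⟩ <;>
  · simp only [coxExp, ha, hb]
    norm_num
    ext ⟨l, e⟩ : 1
    simp only [altWord, map_mul, FreeGroup.lift_apply_of, mul_one, Equiv.Perm.mul_apply,
      signedReflection_apply, Prod.mk.injEq]
    constructor
    · funext k
      simp only [reflect, ha, hb, hA.apply_self i, hA.apply_self j]
      ring
    · simp only [reflect, ha, hb, hA.apply_self i, hA.apply_self j, add_assoc, add_right_inj,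
        ← Int.cast_add]
      rw [ZMod.intCast_eq_intCast_iff_dvd_sub]
      omega

variable [Fintype ι] [DecidableEq ι]

lemma lift_signedReflection_of_mem_titsRels (hA : IsGCM A) :
    ∀ r ∈ titsRels A, FreeGroup.lift (fun k => signedReflection (hA.apply_self k)) r = 1 := by
  rintro r (⟨i, j, hij, hm, rfl⟩ | ⟨i, rfl⟩ | ⟨i, j, rfl⟩ | ⟨i, j, hij, rfl⟩)
  · rw [map_mul, map_inv, mul_inv_eq_one]
    exact lift_signedReflection_braid hA hij hm
  · rw [map_pow, FreeGroup.lift_apply_of, show 4 = 2 * 2 from rfl, pow_mul, signedReflection_sq,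
      ← map_pow, ← ofAdd_nsmul, two_nsmul, ← Pi.single_add, show (1 + 1 : ZMod 2) = 0 from rfl,
      Pi.single_zero, ofAdd_zero, map_one]
  · simp only [map_mul, map_inv, map_pow, FreeGroup.lift_apply_of, signedReflection_sq,
      mul_inv_eq_one]
    rw [← map_mul (signTwist ι), ← map_mul (signTwist ι), mul_comm]
  · simp only [map_mul, map_inv, map_pow, map_zpow, FreeGroup.lift_apply_of, signedReflection_sq,
      mul_inv_eq_iff_eq_mul, signedReflection_mul_signTwist]
    rw [← map_zpow, ← map_mul, ← ofAdd_zsmul, ← ofAdd_add, one_mul]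
    congr 3
    funext k
    by_cases hk : k = i
    · subst hk
      simp [Pi.single_apply, hij]
    · simp [Pi.single_apply, hk]

def titsAction (hA : IsGCM A) : PresentedGroup (titsRels A) →* Equiv.Perm ((ι → ℤ) × ZMod 2) :=
  PresentedGroup.toGroup (lift_signedReflection_of_mem_titsRels hA)

lemma titsAction_of (hA : IsGCM A) (i : ι) :
    titsAction hA (.of i) = signedReflection (hA.apply_self i) :=
  PresentedGroup.toGroup.of _

lemma titsAction_of_sq (hA : IsGCM A) (i : ι) :
    titsAction hA (.of i ^ 2) = signTwist ι (.ofAdd (Pi.single i 1)) := by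
  rw [map_pow, titsAction_of, signedReflection_sq]

end TitsExtension

open TitsExtension

theorem stmt13_general {ι : Type*} [Fintype ι] [DecidableEq ι]
    (A : ι → ι → ℤ) (hA : IsGCM A) :
    letI Wt := PresentedGroup (titsRels A)
    letI Z : Subgroup Wt :=
      Subgroup.closure {x | ∃ i : ι, x = (PresentedGroup.of i) ^ 2}
    (∀ i : ι, orderOf ((PresentedGroup.of i : Wt) ^ 2) = 2) ∧
    Nat.card Z = 2 ^ Fintype.card ι ∧
    ∃ φ : Z ≃* Multiplicative (ι → ZMod 2),
      (∀ i : ι,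
        φ ⟨(PresentedGroup.of i) ^ 2, Subgroup.subset_closure ⟨i, rfl⟩⟩
          = Multiplicative.ofAdd (Pi.single i 1)) ∧
      (∀ (i : ι) (z : Z)
        (hz : (PresentedGroup.of i : Wt) * (z : Wt) * (PresentedGroup.of i : Wt)⁻¹ ∈ Z),
        Multiplicative.toAdd (φ ⟨_, hz⟩)
          = Function.update (Multiplicative.toAdd (φ z)) i
              (Multiplicative.toAdd (φ z) i
                - ∑ j, (A j i : ZMod 2) * Multiplicative.toAdd (φ z) j)) := by
  obtain ⟨φ₀, hφ₀⟩ := exists_mulEquiv_closure_range_of_sq_eq_one (commute_of_sq A)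
    (of_sq_sq A) (titsAction hA) signTwist_injective (titsAction_of_sq hA)
  have hZ : Subgroup.closure {x | ∃ i, x = (PresentedGroup.of i : PresentedGroup (titsRels A)) ^ 2}
      = Subgroup.closure (Set.range fun i => PresentedGroup.of i ^ 2) :=
    congrArg Subgroup.closure (Set.ext fun x => exists_congr fun i => eq_comm)
  let φ := (MulEquiv.subgroupCongr hZ).trans φ₀
  have hφ (z) : signTwist ι (φ z) = titsAction hA z := hφ₀ _
  refine ⟨fun i => orderOf_eq_prime (of_sq_sq A i) fun h => ?_, ?_, φ,
    fun i => signTwist_injective (by rw [hφ, titsAction_of_sq]), fun i z hz => ?_⟩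
  · have : signTwist ι (.ofAdd (Pi.single i 1)) = signTwist ι 1 := by
      rw [← titsAction_of_sq hA, map_one, h, map_one]
    simpa using congrFun (congrArg Multiplicative.toAdd (signTwist_injective this)) i
  · rw [Nat.card_congr φ.toEquiv, Nat.card_congr Multiplicative.toAdd, Nat.card_pi]
    simp
  · change φ _ = .ofAdd _
    apply signTwist_injective
    rw [hφ, map_mul, map_mul, map_inv, titsAction_of, ← hφ z]
    exact mul_inv_eq_of_eq_mul (signedReflection_mul_signTwist _ _)

/-- in the Tits extension `W̃`, the abelian subgroup `Z` generated by the
`s̃_i²` is isomorphic as a `W`-module to `Q^∨/2Q^∨ ≅ (ℤ/2)^{|I|}` (in coordinates, the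
class of `s̃_j²` is the `j`-th basis vector, and conjugation by `s̃_i` acts by the mod-2
reflection `x ↦ x` with `x_i ↦ x_i − Σ_j a_{ji} x_j`); in particular each `s̃_i²` has
order exactly `2` and the `s̃_i²` generate a group of order `2^{|I|}`. -/
theorem stmt13 {ι : Type*} [Fintype ι] [DecidableEq ι]
    (A : ι → ι → ℤ) (hA : IsGCM A)
    (hsymmetrizable : ∃ d : ι → ℤ, (∀ i, 0 < d i) ∧ ∀ i j, d i * A i j = d j * A j i) :
    letI Wt := PresentedGroup (titsRels A)
    letI Z : Subgroup Wt :=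
      Subgroup.closure {x | ∃ i : ι, x = (PresentedGroup.of i) ^ 2}
    (∀ i : ι, orderOf ((PresentedGroup.of i : Wt) ^ 2) = 2) ∧
    Nat.card Z = 2 ^ Fintype.card ι ∧
    ∃ φ : Z ≃* Multiplicative (ι → ZMod 2),
      (∀ i : ι,
        φ ⟨(PresentedGroup.of i) ^ 2, Subgroup.subset_closure ⟨i, rfl⟩⟩
          = Multiplicative.ofAdd (Pi.single i 1)) ∧
      (∀ (i : ι) (z : Z)
        (hz : (PresentedGroup.of i : Wt) * (z : Wt) * (PresentedGroup.of i : Wt)⁻¹ ∈ Z),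
        Multiplicative.toAdd (φ ⟨_, hz⟩)
          = Function.update (Multiplicative.toAdd (φ z)) i
              (Multiplicative.toAdd (φ z) i
                - ∑ j, (A j i : ZMod 2) * Multiplicative.toAdd (φ z) j)) :=
  stmt13_general A hA
end

section
/- For 𝔤 = 𝔰𝔩₂ with affine Cartan matrix A = [[2,−2],[−2,2]], the (non-reduced) Tits extension W̃_a of the affine Weyl group admits no W̃-equivariant section of the coroot lattice Q^∨ ≅ ℤ: any lift τ = z·s̃₀s̃₁ (z ∈ Z) of the generator of Q^∨ satisfies s̃₁τs̃₁⁻¹ = τ⁻¹ if and only if s̃₁²s̃₀² = 1, which fails in W̃_a. -/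
/-!
The squares `s̃₀²`, `s̃₁²` commute with both generators, so `Z` is central, and since `s̃ᵢ⁴ = 1`
it has exponent 2. Hence `s̃₁ τ s̃₁⁻¹ = z s̃₁ s̃₀` and `τ⁻¹ = z s̃₁⁻¹ s̃₀⁻¹`, which agree iff
`s̃₁ s̃₀ = s̃₁⁻¹ s̃₀⁻¹`, i.e. iff `s̃₁² s̃₀² = 1`. The abelian quotient `s̃₀ ↦ 1`, `s̃₁ ↦ 0` onto
`ℤ/4` sends `s̃₁² s̃₀²` to `2 ≠ 0`.
-/

/-- Relators of the Tits extension `W̃_a` of the affine Weyl group of `𝔰𝔩₂`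
(affine Cartan matrix `[[2,−2],[−2,2]]`, so `m₀₁ = ∞` and there is no braid relation):
`s̃_i⁴ = 1`, `s̃₀ s̃₁² s̃₀⁻¹ = s̃₁²` and `s̃₁ s̃₀² s̃₁⁻¹ = s̃₀²`
(the exponents `(s̃_i²)^{−a_{ji}} = (s̃_i²)²` being trivial since `s̃_i⁴ = 1`). -/
def sl2AffineTitsRels : Set (FreeGroup (Fin 2)) :=
  { (FreeGroup.of 0) ^ 4, (FreeGroup.of 1) ^ 4,
    FreeGroup.of 0 * (FreeGroup.of 1) ^ 2 * (FreeGroup.of 0)⁻¹ *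
      (((FreeGroup.of 1) ^ 2) * ((FreeGroup.of 0) ^ 2) ^ 2)⁻¹,
    FreeGroup.of 1 * (FreeGroup.of 0) ^ 2 * (FreeGroup.of 1)⁻¹ *
      (((FreeGroup.of 0) ^ 2) * ((FreeGroup.of 1) ^ 2) ^ 2)⁻¹ }

theorem mul_eq_inv_mul_inv_iff {G : Type*} [Group G] {a b : G} :
    b * a = b⁻¹ * a⁻¹ ↔ b ^ 2 * a ^ 2 = 1 := by
  calc b * a = b⁻¹ * a⁻¹ ↔ b * (b * a) * a = b * (b⁻¹ * a⁻¹) * a := by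
        rw [mul_right_cancel_iff, mul_left_cancel_iff]
    _ ↔ b ^ 2 * a ^ 2 = 1 := by
        simp only [pow_two, mul_assoc, mul_inv_cancel_left, inv_mul_cancel]

theorem conj_mul_eq_inv_iff {G : Type*} [Group G] {a b z : G} (ha : Commute z a)
    (hb : Commute z b) (hz : z ^ 2 = 1) :
    b * (z * a * b) * b⁻¹ = (z * a * b)⁻¹ ↔ b ^ 2 * a ^ 2 = 1 := by
  have hz_inv : z⁻¹ = z := inv_eq_of_mul_eq_one_right (by rwa [← pow_two])
  have hconj : b * (z * a * b) * b⁻¹ = z * (b * a) := by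
    rw [← mul_assoc, mul_inv_cancel_right, ← mul_assoc, ← hb.eq, mul_assoc]
  have hinv : (z * a * b)⁻¹ = z * (b⁻¹ * a⁻¹) := by
    rw [mul_inv_rev, mul_inv_rev, hz_inv, ← mul_assoc, (hb.inv_right.mul_right ha.inv_right).eq]
  rw [hconj, hinv, mul_right_inj, mul_eq_inv_mul_inv_iff]

theorem Subgroup.sq_eq_one_of_mem_closure {G : Type*} [Group G] {S : Set G}
    (hS : S ⊆ Subgroup.center G) (hS2 : ∀ x ∈ S, x ^ 2 = 1) {z : G}
    (hz : z ∈ Subgroup.closure S) : z ^ 2 = 1 := by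
  induction hz using Subgroup.closure_induction with
  | mem x hx => exact hS2 x hx
  | one => exact one_pow 2
  | mul x y hx _ hx2 hy2 =>
    have hxy : Commute x y :=
      Subgroup.mem_center_iff.mp ((Subgroup.closure_le _).mpr hS hx) y |>.symm
    rw [hxy.mul_pow, hx2, hy2, one_mul]
  | inv x _ hx2 => rw [inv_pow, hx2, inv_one]

theorem PresentedGroup.mem_center_of_forall_commute {α : Type*} {rels : Set (FreeGroup α)}
    {g : PresentedGroup rels} (hg : ∀ i, Commute (PresentedGroup.of i) g) :
    g ∈ Subgroup.center (PresentedGroup rels) := by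
  rw [← Subgroup.centralizer_univ, ← Subgroup.coe_top, ← closure_range_of,
    Subgroup.centralizer_closure, Subgroup.mem_centralizer_iff]
  rintro _ ⟨i, rfl⟩
  exact (hg i).eq

theorem PresentedGroup.lift_of_eq_one_of_mem {α : Type*} {rels : Set (FreeGroup α)}
    {r : FreeGroup α} (hr : r ∈ rels) :
    FreeGroup.lift (PresentedGroup.of (rels := rels)) r = 1 := by
  rw [show FreeGroup.lift PresentedGroup.of = PresentedGroup.mk rels from
    FreeGroup.ext_hom _ _ fun _ => FreeGroup.lift_apply_of]
  exact PresentedGroup.one_of_mem hr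

notation "W̃" => PresentedGroup sl2AffineTitsRels

notation "s̃" => (PresentedGroup.of : Fin 2 → W̃)

namespace TitsSl2

theorem of_pow_four (i : Fin 2) : s̃ i ^ 4 = 1 := by
  have hi : FreeGroup.of i ^ 4 ∈ sl2AffineTitsRels := by
    fin_cases i <;> simp [sl2AffineTitsRels]
  simpa using PresentedGroup.lift_of_eq_one_of_mem hi

theorem commute_of_of_sq (i j : Fin 2) : Commute (s̃ i) (s̃ j ^ 2) := by
  obtain rfl | hij := eq_or_ne i j
  · exact Commute.self_pow _ _
  have hr : FreeGroup.of i * FreeGroup.of j ^ 2 * (FreeGroup.of i)⁻¹ *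
      (FreeGroup.of j ^ 2 * (FreeGroup.of i ^ 2) ^ 2)⁻¹ ∈ sl2AffineTitsRels := by
    fin_cases i <;> fin_cases j <;> simp_all [sl2AffineTitsRels]
  have h := PresentedGroup.lift_of_eq_one_of_mem hr
  simp only [map_mul, map_inv, map_pow, FreeGroup.lift_apply_of] at h
  rwa [← pow_mul, of_pow_four, mul_one, mul_inv_eq_one,
    mul_inv_eq_iff_eq_mul] at h

theorem of_sq_mem_center (i : Fin 2) : s̃ i ^ 2 ∈ Subgroup.center W̃ :=
  PresentedGroup.mem_center_of_forall_commute fun j => commute_of_of_sq j i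

def toZMod4 : W̃ →* Multiplicative (ZMod 4) :=
  PresentedGroup.toGroup (f := ![Multiplicative.ofAdd 1, 1]) <| by
    rintro r (rfl | rfl | rfl | rfl) <;> decide

theorem of_one_sq_mul_of_zero_sq_ne_one : s̃ 1 ^ 2 * s̃ 0 ^ 2 ≠ 1 := fun h => by
  have := congrArg toZMod4 h
  simp only [map_mul, map_pow, map_one, toZMod4, PresentedGroup.toGroup.of] at this
  exact absurd this (by decide)

end TitsSl2

/-- for `𝔤 = 𝔰𝔩₂`, in the (non-reduced) Tits extension `W̃_a` of the
affine Weyl group, any lift `τ = z·s̃₀s̃₁` (with `z ∈ Z`, the subgroup generated by the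
squares) of the generator of `Q^∨ ≅ ℤ` satisfies `s̃₁ τ s̃₁⁻¹ = τ⁻¹` if and only if
`s̃₁² s̃₀² = 1`; and `s̃₁² s̃₀² ≠ 1` in `W̃_a`, so there is no `W̃`-equivariant section
of `Q^∨`. -/
theorem stmt14 :
    letI G := PresentedGroup sl2AffineTitsRels
    letI s0 : G := PresentedGroup.of 0
    letI s1 : G := PresentedGroup.of 1
    (∀ z ∈ Subgroup.closure ({s0 ^ 2, s1 ^ 2} : Set G),
        (s1 * (z * s0 * s1) * s1⁻¹ = (z * s0 * s1)⁻¹ ↔ s1 ^ 2 * s0 ^ 2 = 1)) ∧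
      s1 ^ 2 * s0 ^ 2 ≠ 1 := by
  have hZ_central : {s̃ 0 ^ 2, s̃ 1 ^ 2} ⊆ (Subgroup.center W̃ : Set W̃) := by
    rintro _ (rfl | rfl) <;> exact TitsSl2.of_sq_mem_center _
  have hZ_sq : ∀ x ∈ ({s̃ 0 ^ 2, s̃ 1 ^ 2} : Set W̃), x ^ 2 = 1 := by
    rintro _ (rfl | rfl) <;> rw [← pow_mul] <;> exact TitsSl2.of_pow_four _
  refine ⟨fun z hz => ?_, TitsSl2.of_one_sq_mul_of_zero_sq_ne_one⟩
  have hz_central := Subgroup.mem_center_iff.mp ((Subgroup.closure_le _).mpr hZ_central hz)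
  exact conj_mul_eq_inv_iff (hz_central _).symm (hz_central _).symm
    (Subgroup.sq_eq_one_of_mem_closure hZ_central hZ_sq hz)
end

section
/- In the Yangian Y(𝔤𝔩_n) with RTT generators t_{ij}^{(r)}, define D_i = 2t_{ii}^{(2)} − Σ_{j<i} κ_{θ_j−θ_i} − E_{ii}², where κ_{θ_a−θ_b} = E_{ab}E_{ba} + E_{ba}E_{ab} and E_{ij} = t_{ij}^{(1)}. Then under the symmetric group action σ(t_{ij}^{(r)}) = t_{σ(i)σ(j)}^{(r)}: (a) (i,i+1)·D_j = D_j for j ∉ {i,i+1}, and (b) (i,i+1)·D_i − D_{i+1} = κ_{θ_i−θ_{i+1}}. -/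
/-- The truncated Casimir `κ_{θ_a − θ_b} = E_{ab}E_{ba} + E_{ba}E_{ab}` built from the
copy `E_{ij} = t_{ij}^{(1)}` of `𝔤𝔩_n` inside `Y(𝔤𝔩_n)`. -/
def kapGL {A : Type*} [Ring A] {n : ℕ} (E : Fin n → Fin n → A) (a b : Fin n) : A :=
  E a b * E b a + E b a * E a b

/-- `D_i = 2t_{ii}^{(2)} − Σ_{j<i} κ_{θ_j−θ_i} − E_{ii}²`. -/
def DopGL {A : Type*} [Ring A] {n : ℕ} (t : ℕ → Fin n → Fin n → A) (i : Fin n) : A :=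
  2 • t 2 i i - (∑ k ∈ Finset.univ.filter (fun k => k < i), kapGL (t 1) k i)
    - t 1 i i * t 1 i i

/-- in the Yangian `Y(𝔤𝔩_n)` (presented by the RTT generators
`t_{ij}^{(r)}`), with `D_i = 2t_{ii}^{(2)} − Σ_{j<i} κ_{θ_j−θ_i} − E_{ii}²` and the
symmetric group acting by `σ(t_{ij}^{(r)}) = t_{σ(i)σ(j)}^{(r)}`:
(a) `(i,i+1)·D_j = D_j` for `j ∉ {i, i+1}`, and
(b) `(i,i+1)·D_i − D_{i+1} = κ_{θ_i−θ_{i+1}}`. -/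
theorem stmt16 {A : Type*} [Ring A] (n : ℕ)
    (t : ℕ → Fin n → Fin n → A)
    (ht0 : ∀ i j : Fin n, t 0 i j = if i = j then 1 else 0)
    (hRTT : ∀ (r s : ℕ) (i j k l : Fin n),
      (t (r + 1) i j * t s k l - t s k l * t (r + 1) i j)
          - (t r i j * t (s + 1) k l - t (s + 1) k l * t r i j)
        = t r k j * t s i l - t s k j * t r i l)
    (φ : Equiv.Perm (Fin n) → A ≃+* A)
    (hφ : ∀ (σ : Equiv.Perm (Fin n)) (r : ℕ) (i j : Fin n),
      φ σ (t r i j) = t r (σ i) (σ j))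
    (i₁ i₂ : Fin n) (h12 : (i₁ : ℕ) + 1 = (i₂ : ℕ)) :
    (∀ j : Fin n, j ≠ i₁ → j ≠ i₂ →
        φ (Equiv.swap i₁ i₂) (DopGL t j) = DopGL t j) ∧
      φ (Equiv.swap i₁ i₂) (DopGL t i₁) - DopGL t i₂ = kapGL (t 1) i₁ i₂ := by
  set σ := Equiv.swap i₁ i₂ with hσ
  have hne12 : i₁ ≠ i₂ := by
    intro h; rw [h] at h12; omega
  have hmapκ : ∀ (a b : Fin n), φ σ (kapGL (t 1) a b) = kapGL (t 1) (σ a) (σ b) := by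
    intro a b
    simp [kapGL, map_add, map_mul, hφ]
  have hmapD : ∀ j : Fin n, φ σ (DopGL t j) =
      2 • t 2 (σ j) (σ j)
        - (∑ k ∈ Finset.univ.filter (fun k => k < j), kapGL (t 1) (σ k) (σ j))
        - t 1 (σ j) (σ j) * t 1 (σ j) (σ j) := by
    intro j
    simp [DopGL, map_sub, map_nsmul, map_sum, map_mul, map_ofNat, hφ, hmapκ]
  constructor
  · intro j hj1 hj2
    have hσj : σ j = j := Equiv.swap_apply_of_ne_of_ne hj1 hj2
    have hcase : (j : ℕ) < i₁ ∨ (i₂ : ℕ) < j := by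
      have h1 : (j : ℕ) ≠ i₁ := fun h => hj1 (Fin.ext h)
      have h2 : (j : ℕ) ≠ i₂ := fun h => hj2 (Fin.ext h)
      omega
    have hsum : (∑ k ∈ Finset.univ.filter (fun k => k < j), kapGL (t 1) (σ k) j)
        = ∑ k ∈ Finset.univ.filter (fun k => k < j), kapGL (t 1) k j := by
      refine Finset.sum_equiv σ ?_ ?_
      · intro k
        simp only [Finset.mem_filter, Finset.mem_univ, true_and]
        rcases eq_or_ne k i₁ with rfl | h1
        · rw [hσ, Equiv.swap_apply_left, Fin.lt_def, Fin.lt_def]; omega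
        rcases eq_or_ne k i₂ with rfl | h2
        · rw [hσ, Equiv.swap_apply_right, Fin.lt_def, Fin.lt_def]; omega
        · rw [hσ, Equiv.swap_apply_of_ne_of_ne h1 h2]
      · intro k _; rfl
    rw [hmapD, hσj, hsum, DopGL]
  · have hσi₁ : σ i₁ = i₂ := Equiv.swap_apply_left i₁ i₂
    have hsum1 : (∑ k ∈ Finset.univ.filter (fun k => k < i₁), kapGL (t 1) (σ k) i₂)
        = ∑ k ∈ Finset.univ.filter (fun k => k < i₁), kapGL (t 1) k i₂ := by
      refine Finset.sum_congr rfl ?_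
      intro k hk
      simp only [Finset.mem_filter, Finset.mem_univ, true_and, Fin.lt_def] at hk
      have h1 : k ≠ i₁ := fun h => by rw [h] at hk; omega
      have h2 : k ≠ i₂ := fun h => by rw [h] at hk; omega
      rw [hσ, Equiv.swap_apply_of_ne_of_ne h1 h2]
    have hfilt : Finset.univ.filter (fun k : Fin n => k < i₂)
        = insert i₁ (Finset.univ.filter (fun k => k < i₁)) := by
      ext k
      simp only [Finset.mem_filter, Finset.mem_univ, true_and, Finset.mem_insert,
        Fin.lt_def]
      constructor
      · intro h
        rcases Nat.lt_or_ge (k : ℕ) i₁ with h' | h'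
        · exact Or.inr h'
        · exact Or.inl (Fin.ext (by omega))
      · rintro (rfl | h) <;> omega
    have hnotmem : i₁ ∉ Finset.univ.filter (fun k : Fin n => k < i₁) := by
      simp
    have hsum2 : (∑ k ∈ Finset.univ.filter (fun k => k < i₂), kapGL (t 1) k i₂)
        = kapGL (t 1) i₁ i₂
          + ∑ k ∈ Finset.univ.filter (fun k => k < i₁), kapGL (t 1) k i₂ := by
      rw [hfilt, Finset.sum_insert hnotmem]
    rw [hmapD, hσi₁, hsum1, DopGL, hsum2]
    abel
end
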